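/- arXiv:2311.13259 — 3 statements merged into one kernel-verified Lean document; each statement's English description precedes it below -/
import Mathlib

section
/- Let Θ be the free module over ℂ[[s]] with basis e₁, e₂ (modeling (Log s) and (Log s)² in Ξ₁²/Ξ₁⁰). Define ℂ-linear operators a, b on Θ by a(s^m e_k) = s^{m+1} e_k for k = 1,2, b(s^m e₁) = s^{m+1}/(m+1) · e₁, and b(s^m e₂) = s^{m+1}/(m+1) · e₂ − 2 s^{m+1}/(m+1)² · e₁, extended continuously/ℂ-linearly to formal power series coefficients. Then a∘b − b∘a = b∘b as operators on Θ. -/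
open PowerSeries

/-- `Θ = ℂ[[s]]e₁ ⊕ ℂ[[s]]e₂`: first component is the `e₁`-coefficient,
second component the `e₂`-coefficient. -/
abbrev Theta : Type := PowerSeries ℂ × PowerSeries ℂ

/-- `s^m ↦ s^{m+1}/(m+1)`, extended to power series coefficients. -/
noncomputable def shiftDiv : PowerSeries ℂ →ₗ[ℂ] PowerSeries ℂ where
  toFun φ := PowerSeries.mk fun n => if n = 0 then 0 else (PowerSeries.coeff (R := ℂ) (n - 1)) φ / n
  map_add' φ ψ := by
    ext n
    simp only [PowerSeries.coeff_mk, map_add]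
    split_ifs <;> simp [add_div]
  map_smul' c φ := by
    ext n
    simp only [PowerSeries.coeff_mk, PowerSeries.coeff_smul, RingHom.id_apply, smul_eq_mul]
    split_ifs <;> simp [mul_div_assoc]

/-- `s^m ↦ s^{m+1}/(m+1)²`, extended to power series coefficients. -/
noncomputable def shiftDiv2 : PowerSeries ℂ →ₗ[ℂ] PowerSeries ℂ where
  toFun φ := PowerSeries.mk fun n => if n = 0 then 0 else (PowerSeries.coeff (R := ℂ) (n - 1)) φ / (n : ℂ) ^ 2
  map_add' φ ψ := by
    ext n
    simp only [PowerSeries.coeff_mk, map_add]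
    split_ifs <;> simp [add_div]
  map_smul' c φ := by
    ext n
    simp only [PowerSeries.coeff_mk, PowerSeries.coeff_smul, RingHom.id_apply, smul_eq_mul]
    split_ifs <;> simp [mul_div_assoc]

/-- The operator `a`: multiplication by `s` on both components. -/
noncomputable def opa : Theta →ₗ[ℂ] Theta :=
  (LinearMap.mulLeft ℂ (PowerSeries.X : PowerSeries ℂ)).prodMap
    (LinearMap.mulLeft ℂ (PowerSeries.X : PowerSeries ℂ))

/-- The operator `b`: `b(s^m e₁) = s^{m+1}/(m+1) e₁`,
`b(s^m e₂) = s^{m+1}/(m+1) e₂ − 2 s^{m+1}/(m+1)² e₁`. -/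
noncomputable def opb : Theta →ₗ[ℂ] Theta :=
  LinearMap.prod
    (shiftDiv ∘ₗ LinearMap.fst ℂ (PowerSeries ℂ) (PowerSeries ℂ)
      - (2 : ℂ) • (shiftDiv2 ∘ₗ LinearMap.snd ℂ (PowerSeries ℂ) (PowerSeries ℂ)))
    (shiftDiv ∘ₗ LinearMap.snd ℂ (PowerSeries ℂ) (PowerSeries ℂ))

/-! In the basis `e₁, e₂`, `a = diag(s, s)` and `b` is upper triangular with `∫` on the diagonal
and `-2 ∫₂` above it (`∫ = shiftDiv`, `∫₂ = shiftDiv2`). Comparing blocks, `[a, b] = b²` amounts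
to `[s, ∫] = ∫²` and `[s, ∫₂] = ∫ ∫₂ + ∫₂ ∫`, two identities between the rational weights that
these operators put on the coefficients. -/

namespace PowerSeries

@[simp]
lemma constantCoeff_shiftDiv (φ : ℂ⟦X⟧) : constantCoeff (shiftDiv φ) = 0 := by
  simp [shiftDiv, ← coeff_zero_eq_constantCoeff_apply]

@[simp]
lemma coeff_succ_shiftDiv (φ : ℂ⟦X⟧) (n : ℕ) :
    coeff (n + 1) (shiftDiv φ) = coeff n φ / (n + 1) := by
  simp [shiftDiv]

@[simp]
lemma constantCoeff_shiftDiv2 (φ : ℂ⟦X⟧) : constantCoeff (shiftDiv2 φ) = 0 := by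
  simp [shiftDiv2, ← coeff_zero_eq_constantCoeff_apply]

@[simp]
lemma coeff_succ_shiftDiv2 (φ : ℂ⟦X⟧) (n : ℕ) :
    coeff (n + 1) (shiftDiv2 φ) = coeff n φ / (n + 1) ^ 2 := by
  simp [shiftDiv2]

lemma shiftDiv_X_pow (m : ℕ) : shiftDiv (X ^ m : ℂ⟦X⟧) = ((m + 1 : ℂ))⁻¹ • X ^ (m + 1) := by
  ext (_ | n)
  · simp
  · by_cases h : n = m <;> simp [coeff_X_pow, h, div_eq_inv_mul]

lemma shiftDiv2_X_pow (m : ℕ) :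
    shiftDiv2 (X ^ m : ℂ⟦X⟧) = ((m + 1 : ℂ) ^ 2)⁻¹ • X ^ (m + 1) := by
  ext (_ | n)
  · simp
  · by_cases h : n = m <;> simp [coeff_X_pow, h, div_eq_inv_mul]

/-- `[s, ∫] = ∫ ∘ ∫`: on coefficients, `1/n - 1/(n+1) = 1/(n(n+1))`. -/
lemma X_mul_shiftDiv_sub_shiftDiv_X_mul (φ : ℂ⟦X⟧) :
    X * shiftDiv φ - shiftDiv (X * φ) = shiftDiv (shiftDiv φ) := by
  ext (_ | _ | n)
  · simp
  · simp
  · simp only [map_sub, coeff_succ_X_mul, coeff_succ_shiftDiv]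
    have hn₁ : (n : ℂ) + 1 ≠ 0 := Nat.cast_add_one_ne_zero n
    have hn₂ : (n : ℂ) + 1 + 1 ≠ 0 := by exact_mod_cast Nat.succ_ne_zero (n + 1)
    push_cast
    field_simp
    ring

/-- On coefficients, `1/n² - 1/(n+1)² = 1/(n²(n+1)) + 1/(n(n+1)²)`. -/
lemma X_mul_shiftDiv2_sub_shiftDiv2_X_mul (φ : ℂ⟦X⟧) :
    X * shiftDiv2 φ - shiftDiv2 (X * φ) = shiftDiv (shiftDiv2 φ) + shiftDiv2 (shiftDiv φ) := by
  ext (_ | _ | n)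
  · simp
  · simp
  · simp only [map_sub, map_add, coeff_succ_X_mul, coeff_succ_shiftDiv, coeff_succ_shiftDiv2]
    have hn₁ : (n : ℂ) + 1 ≠ 0 := Nat.cast_add_one_ne_zero n
    have hn₂ : (n : ℂ) + 1 + 1 ≠ 0 := by exact_mod_cast Nat.succ_ne_zero (n + 1)
    push_cast
    field_simp
    ring

end PowerSeries

/-- The operators `a`, `b` act on the monomial basis by the prescribed formulas, and
`a∘b − b∘a = b∘b` as operators on `Θ`. -/
theorem stmt0 :
    (∀ m : ℕ,
      opa ((PowerSeries.X : PowerSeries ℂ) ^ m, 0) = ((PowerSeries.X : PowerSeries ℂ) ^ (m + 1), 0) ∧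
      opa (0, (PowerSeries.X : PowerSeries ℂ) ^ m) = (0, (PowerSeries.X : PowerSeries ℂ) ^ (m + 1)) ∧
      opb ((PowerSeries.X : PowerSeries ℂ) ^ m, 0)
        = (((m + 1 : ℂ))⁻¹ • (PowerSeries.X : PowerSeries ℂ) ^ (m + 1), 0) ∧
      opb (0, (PowerSeries.X : PowerSeries ℂ) ^ m)
        = (-(2 / ((m + 1 : ℂ)) ^ 2) • (PowerSeries.X : PowerSeries ℂ) ^ (m + 1),
           ((m + 1 : ℂ))⁻¹ • (PowerSeries.X : PowerSeries ℂ) ^ (m + 1)))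
    ∧ opa ∘ₗ opb - opb ∘ₗ opa = opb ∘ₗ opb := by
  refine ⟨fun m => ⟨?_, ?_, ?_, ?_⟩, ?_⟩
  · simp [opa, pow_succ']
  · simp [opa, pow_succ']
  · simp [opb, shiftDiv_X_pow]
  · simp [opb, shiftDiv_X_pow, shiftDiv2_X_pow, smul_smul, div_eq_mul_inv]
  · refine LinearMap.ext fun ⟨φ, ψ⟩ => ?_
    have h₁ := X_mul_shiftDiv_sub_shiftDiv_X_mul φ
    have h₂ := X_mul_shiftDiv_sub_shiftDiv_X_mul ψ
    have h₃ := X_mul_shiftDiv2_sub_shiftDiv2_X_mul ψ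
    simp only [opa, opb, LinearMap.sub_apply, LinearMap.comp_apply, LinearMap.prodMap_apply,
      LinearMap.prod_apply, Function.prod, LinearMap.fst_apply, LinearMap.snd_apply,
      LinearMap.smul_apply, LinearMap.mulLeft_apply, Prod.mk_sub_mk, map_sub, map_smul,
      Prod.mk.injEq]
    constructor
    · linear_combination (norm := module) h₁ - (2 : ℂ) • h₃
    · exact h₂
end

section
/- With E_λ as above, (4⁴·(a − (13/4)b)(a − (5/2)b)(a − (7/4)b)·a)(v₀) = 4⁴ · ((λ + 3/4)(λ + 1/2)(λ + 1/4) / ((λ+2)(λ+3)(λ+4))) · v₄. This identifies the Bernstein polynomial of Q = 4⁴(a − (13/4)b)(a − (5/2)b)(a − (7/4)b)a as x(x + 1/4)(x + 1/2)(x + 3/4) up to the stated normalization. -/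
/-- `E_λ`: the ℂ-vector space with basis `(v_m)_{m≥0}` (with `v_m = Finsupp.single m 1`
modeling `s^{λ+m}`); the operator `a` sends `v_m` to `v_{m+1}`. -/
noncomputable def opA : (ℕ →₀ ℂ) →ₗ[ℂ] (ℕ →₀ ℂ) :=
  Finsupp.lmapDomain ℂ ℂ (· + 1)

/-- The operator `b` on `E_λ`: `b(v_m) = v_{m+1}/(λ+m+1)`. -/
noncomputable def opB (l : ℂ) : (ℕ →₀ ℂ) →ₗ[ℂ] (ℕ →₀ ℂ) :=
  Finsupp.lsum ℂ fun m : ℕ => (l + m + 1)⁻¹ • Finsupp.lsingle (m + 1)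

/-- On `E_λ`, `(4⁴·(a − (13/4)b)(a − (5/2)b)(a − (7/4)b)·a)(v₀)
 = 4⁴·((λ+3/4)(λ+1/2)(λ+1/4)/((λ+2)(λ+3)(λ+4))) · v₄`. -/
theorem stmt12 (l : ℂ) (hl : ∀ m : ℕ, 1 ≤ m → l + (m : ℂ) ≠ 0) :
    ((4 ^ 4 : ℂ) • ((opA - (13 / 4 : ℂ) • opB l) ∘ₗ (opA - (5 / 2 : ℂ) • opB l) ∘ₗ
        (opA - (7 / 4 : ℂ) • opB l) ∘ₗ opA)) (Finsupp.single 0 1)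
      = ((4 ^ 4 : ℂ) *
          ((l + 3 / 4) * (l + 1 / 2) * (l + 1 / 4) / ((l + 2) * (l + 3) * (l + 4)))) •
          Finsupp.single 4 (1 : ℂ) := by
  have h2 := hl 2 (by norm_num)
  have h3 := hl 3 (by norm_num)
  have h4 := hl 4 (by norm_num)
  push_cast at h2 h3 h4
  simp only [opA, opB, LinearMap.smul_apply, LinearMap.comp_apply, LinearMap.sub_apply,
    Finsupp.lmapDomain_apply, Finsupp.mapDomain_single, Finsupp.lsum_single,
    LinearMap.smul_apply, Finsupp.lsingle_apply, Finsupp.smul_single, smul_eq_mul,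
    mul_one, map_sub, map_smul, Finsupp.mapDomain_smul, Nat.cast_ofNat, Nat.cast_one,
    ← Finsupp.single_sub]
  congr 1
  push_cast
  have e2 : l + 1 + 1 = l + 2 := by ring
  have e3 : l + 2 + 1 = l + 3 := by ring
  have e4 : l + 3 + 1 = l + 4 := by ring
  rw [e2, e3, e4]
  have g2 : (1 : ℂ) - 7 / 4 * (l + 2)⁻¹ = (l + 1 / 4) * (l + 2)⁻¹ := by
    linear_combination (-1 : ℂ) * mul_inv_cancel₀ h2
  have g3 : (1 : ℂ) - 5 / 2 * (l + 3)⁻¹ = (l + 1 / 2) * (l + 3)⁻¹ := by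
    linear_combination (-1 : ℂ) * mul_inv_cancel₀ h3
  have g4 : (1 : ℂ) - 13 / 4 * (l + 4)⁻¹ = (l + 3 / 4) * (l + 4)⁻¹ := by
    linear_combination (-1 : ℂ) * mul_inv_cancel₀ h4
  calc _ = 4 ^ 4 * (((1 : ℂ) - 7 / 4 * (l + 2)⁻¹) * ((1 : ℂ) - 5 / 2 * (l + 3)⁻¹) *
            ((1 : ℂ) - 13 / 4 * (l + 4)⁻¹)) := by ring
    _ = 4 ^ 4 * ((l + 1 / 4) * (l + 2)⁻¹ * ((l + 1 / 2) * (l + 3)⁻¹) *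
            ((l + 3 / 4) * (l + 4)⁻¹)) := by rw [g2, g3, g4]
    _ = _ := by
        rw [mul_div_assoc', eq_div_iff (mul_ne_zero (mul_ne_zero h2 h3) h4)]
        field_simp
end

section
/- Let λ ∈ ℂ, f = x y³ + y z³ + z x³ + λ x y z, and J(f) = (∂f/∂x, ∂f/∂y, ∂f/∂z) ⊂ ℂ[x,y,z]. Then f + x y³ ∈ J(f), i.e. xy³ ≡ −f modulo the Jacobian ideal of f. -/
open MvPolynomial

/-- `f = x y³ + y z³ + z x³ + λ x y z` in `ℂ[x,y,z]` (variables `X 0, X 1, X 2`). -/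
noncomputable def fpoly (l : ℂ) : MvPolynomial (Fin 3) ℂ :=
  X 0 * X 1 ^ 3 + X 1 * X 2 ^ 3 + X 2 * X 0 ^ 3 + C l * (X 0 * X 1 * X 2)

/-- The Jacobian ideal `J(f) = (∂f/∂x, ∂f/∂y, ∂f/∂z)` of `f` in `ℂ[x,y,z]`. -/
noncomputable def Jideal (l : ℂ) : Ideal (MvPolynomial (Fin 3) ℂ) :=
  Ideal.span {pderiv 0 (fpoly l), pderiv 1 (fpoly l), pderiv 2 (fpoly l)}

/-- `f + xy³ ∈ J(f)`, i.e. `xy³ ≡ −f` modulo the Jacobian ideal of `f`. -/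
theorem stmt17 (l : ℂ) :
    fpoly l + X 0 * X 1 ^ 3 ∈ Jideal l := by
  have h7 : C (7:ℂ) * (fpoly l + X 0 * X 1 ^ 3) =
      (2 * X 0) * pderiv 0 (fpoly l) + (4 * X 1) * pderiv 1 (fpoly l)
        + X 2 * pderiv 2 (fpoly l) := by
    simp only [fpoly, map_add, map_mul, pderiv_X, pderiv_C, Derivation.leibniz,
      Derivation.leibniz_pow, smul_eq_mul]
    simp [Pi.single_apply]
    simp only [map_ofNat]
    ring
  have h1 : fpoly l + X 0 * X 1 ^ 3
      = C ((7:ℂ)⁻¹) * (C (7:ℂ) * (fpoly l + X 0 * X 1 ^ 3)) := by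
    rw [← mul_assoc, ← C_mul]
    norm_num
  rw [h1, h7]
  refine Ideal.mul_mem_left _ _ ?_
  refine Ideal.add_mem _ (Ideal.add_mem _ ?_ ?_) ?_ <;>
    exact Ideal.mul_mem_left _ _ (Ideal.subset_span (by simp))
end
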